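/- arXiv:1011.5822 — 4 statements merged into one kernel-verified Lean document; each statement's English description precedes it below -/
import Mathlib

section
/- The function C(u₁,u₂,u₃) = K₃ · ((u₂-u₁)/((u₃-u₂)(u₃-u₁)))^{1/3}, defined for real u₁ < u₂ < u₃ (with K₃ any constant), satisfies the PDE (2/(u₁-u₂)) ∂_{u₁}C + (2/(u₃-u₂)) ∂_{u₃}C + 3 ∂²_{u₂}C − (2/(3(u₃-u₂)²)) C = 0. -/
/-!
Write `C = K₃ q^{1/3}` with `q = (u₂ - u₁) / ((u₃ - u₂)(u₃ - u₁))`. Each first partial derivative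
of `C` is `C` times a third of the logarithmic derivative `ℓ` of `q` in that variable, a sum of
fractions `±1/(uⱼ - uᵢ)`, and `∂₂²C = C (ℓ²/9 + ℓ'/3)`. Dividing the PDE by `C` leaves a rational
identity in `u₂ - u₁` and `u₃ - u₂`, which holds because `u₃ - u₁` is their sum.
-/

open Real Filter Topology

theorem HasDerivAt.rpow_const_of_logDeriv {f : ℝ → ℝ} {ℓ x p : ℝ}
    (hf : HasDerivAt f (f x * ℓ) x) (hx : f x ≠ 0) :
    HasDerivAt (fun y => f y ^ p) (f x ^ p * (p * ℓ)) x := by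
  convert hf.rpow_const (p := p) (Or.inl hx) using 1
  rw [rpow_sub_one hx]
  field_simp

theorem hasDerivAt_deriv_rpow_const_of_logDeriv {f ℓ : ℝ → ℝ} {ℓ' x p : ℝ}
    (hf : ∀ᶠ y in 𝓝 x, f y ≠ 0 ∧ HasDerivAt f (f y * ℓ y) y) (hℓ : HasDerivAt ℓ ℓ' x) :
    HasDerivAt (deriv fun y => f y ^ p) (f x ^ p * (p ^ 2 * ℓ x ^ 2 + p * ℓ')) x := by
  have hderiv : deriv (fun y => f y ^ p) =ᶠ[𝓝 x] fun y => f y ^ p * (p * ℓ y) :=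
    hf.mono fun y hy => (hy.2.rpow_const_of_logDeriv hy.1).deriv
  obtain ⟨hx, hfx⟩ := hf.self_of_nhds
  refine HasDerivAt.congr_of_eventuallyEq ?_ hderiv
  exact ((hfx.rpow_const_of_logDeriv (p := p) hx).fun_mul (hℓ.const_mul p)).congr_deriv (by ring)

noncomputable def cardyRatio (u₁ u₂ u₃ : ℝ) : ℝ := (u₂ - u₁) / ((u₃ - u₂) * (u₃ - u₁))

section CardyRatio

variable {u₁ u₂ u₃ : ℝ}

theorem cardyRatio_ne_zero (h₁₂ : u₁ ≠ u₂) (h₁₃ : u₁ ≠ u₃) (h₂₃ : u₂ ≠ u₃) :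
    cardyRatio u₁ u₂ u₃ ≠ 0 :=
  div_ne_zero (sub_ne_zero.2 h₁₂.symm)
    (mul_ne_zero (sub_ne_zero.2 h₂₃.symm) (sub_ne_zero.2 h₁₃.symm))

theorem hasDerivAt_cardyRatio_fst (h₁₂ : u₁ ≠ u₂) (h₁₃ : u₁ ≠ u₃) (h₂₃ : u₂ ≠ u₃) :
    HasDerivAt (fun x => cardyRatio x u₂ u₃)
      (cardyRatio u₁ u₂ u₃ * ((u₃ - u₁)⁻¹ - (u₂ - u₁)⁻¹)) u₁ := by
  have hnum := (hasDerivAt_id u₁).const_sub u₂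
  have hden := ((hasDerivAt_id u₁).const_sub u₃).const_mul (u₃ - u₂)
  refine (hnum.div hden
    (mul_ne_zero (sub_ne_zero.2 h₂₃.symm) (sub_ne_zero.2 h₁₃.symm))).congr_deriv ?_
  simp only [cardyRatio, id]
  field_simp [sub_ne_zero, h₁₂.symm, h₁₃.symm, h₂₃.symm]
  ring

theorem hasDerivAt_cardyRatio_snd (h₁₂ : u₁ ≠ u₂) (h₁₃ : u₁ ≠ u₃) (h₂₃ : u₂ ≠ u₃) :
    HasDerivAt (fun y => cardyRatio u₁ y u₃)
      (cardyRatio u₁ u₂ u₃ * ((u₂ - u₁)⁻¹ + (u₃ - u₂)⁻¹)) u₂ := by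
  have hnum := (hasDerivAt_id u₂).sub_const u₁
  have hden := ((hasDerivAt_id u₂).const_sub u₃).mul_const (u₃ - u₁)
  refine (hnum.div hden
    (mul_ne_zero (sub_ne_zero.2 h₂₃.symm) (sub_ne_zero.2 h₁₃.symm))).congr_deriv ?_
  simp only [cardyRatio, id]
  field_simp [sub_ne_zero, h₁₂.symm, h₁₃.symm, h₂₃.symm]
  ring

theorem hasDerivAt_cardyRatio_thd (h₁₃ : u₁ ≠ u₃) (h₂₃ : u₂ ≠ u₃) :
    HasDerivAt (fun z => cardyRatio u₁ u₂ z)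
      (cardyRatio u₁ u₂ u₃ * (-(u₃ - u₂)⁻¹ - (u₃ - u₁)⁻¹)) u₃ := by
  have hden := ((hasDerivAt_id u₃).sub_const u₂).fun_mul ((hasDerivAt_id u₃).sub_const u₁)
  refine ((hasDerivAt_const u₃ (u₂ - u₁)).div hden
    (mul_ne_zero (sub_ne_zero.2 h₂₃.symm) (sub_ne_zero.2 h₁₃.symm))).congr_deriv ?_
  simp only [cardyRatio, id]
  field_simp [sub_ne_zero, h₁₃.symm, h₂₃.symm]
  ring

theorem eventually_hasDerivAt_cardyRatio_snd (h₁₂ : u₁ < u₂) (h₂₃ : u₂ < u₃) :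
    ∀ᶠ y in 𝓝 u₂, cardyRatio u₁ y u₃ ≠ 0 ∧
      HasDerivAt (fun y => cardyRatio u₁ y u₃)
        (cardyRatio u₁ y u₃ * ((y - u₁)⁻¹ + (u₃ - y)⁻¹)) y := by
  have h₁₃ := (h₁₂.trans h₂₃).ne
  filter_upwards [Ioo_mem_nhds h₁₂ h₂₃] with y hy
  exact ⟨cardyRatio_ne_zero hy.1.ne h₁₃ hy.2.ne, hasDerivAt_cardyRatio_snd hy.1.ne h₁₃ hy.2.ne⟩

theorem hasDerivAt_inv_sub_add_inv_sub (h₁₂ : u₁ ≠ u₂) (h₂₃ : u₂ ≠ u₃) :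
    HasDerivAt (fun y => (y - u₁)⁻¹ + (u₃ - y)⁻¹) (((u₃ - u₂) ^ 2)⁻¹ - ((u₂ - u₁) ^ 2)⁻¹) u₂ := by
  refine ((((hasDerivAt_id u₂).sub_const u₁).inv (sub_ne_zero.2 h₁₂.symm)).add
    (((hasDerivAt_id u₂).const_sub u₃).inv (sub_ne_zero.2 h₂₃.symm))).congr_deriv ?_
  simp only [id]
  ring

theorem cardy_logDeriv_identity (h₁₂ : u₁ ≠ u₂) (h₁₃ : u₁ ≠ u₃) (h₂₃ : u₂ ≠ u₃) :
    2 / (u₁ - u₂) * (1 / 3 * ((u₃ - u₁)⁻¹ - (u₂ - u₁)⁻¹))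
      + 2 / (u₃ - u₂) * (1 / 3 * (-(u₃ - u₂)⁻¹ - (u₃ - u₁)⁻¹))
      + 3 * ((1 / 3) ^ 2 * ((u₂ - u₁)⁻¹ + (u₃ - u₂)⁻¹) ^ 2
        + 1 / 3 * (((u₃ - u₂) ^ 2)⁻¹ - ((u₂ - u₁) ^ 2)⁻¹))
      - 2 / (3 * (u₃ - u₂) ^ 2) = 0 := by
  field_simp [sub_ne_zero, h₁₂, h₁₂.symm, h₁₃.symm, h₂₃.symm]
  ring

end CardyRatio

/-- The Cardy-type function `C(u₁,u₂,u₃) = K₃ ((u₂-u₁)/((u₃-u₂)(u₃-u₁)))^{1/3}`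
satisfies the PDE
`(2/(u₁-u₂)) ∂₁C + (2/(u₃-u₂)) ∂₃C + 3 ∂₂²C − (2/(3(u₃-u₂)²)) C = 0`
on the set `{u₁ < u₂ < u₃}`. -/
theorem cardy_pde (K₃ : ℝ)
    (C : ℝ → ℝ → ℝ → ℝ)
    (hC : ∀ u₁ u₂ u₃ : ℝ, C u₁ u₂ u₃ =
      K₃ * ((u₂ - u₁) / ((u₃ - u₂) * (u₃ - u₁))) ^ (1/3 : ℝ))
    (a b c : ℝ) (hab : a < b) (hbc : b < c) :
    (2 / (a - b)) * deriv (fun x => C x b c) a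
      + (2 / (c - b)) * deriv (fun z => C a b z) c
      + 3 * deriv (deriv (fun y => C a y c)) b
      - (2 / (3 * (c - b) ^ 2)) * C a b c = 0 := by
  obtain rfl : C = fun u₁ u₂ u₃ => K₃ * cardyRatio u₁ u₂ u₃ ^ (1 / 3 : ℝ) := funext₃ hC
  have hab' := hab.ne
  have hbc' := hbc.ne
  have hac' := (hab.trans hbc).ne
  have hq := cardyRatio_ne_zero hab' hac' hbc'
  have d₁ := ((hasDerivAt_cardyRatio_fst hab' hac' hbc').rpow_const_of_logDeriv
    (p := 1 / 3) hq).const_mul K₃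
  have d₃ := ((hasDerivAt_cardyRatio_thd hac' hbc').rpow_const_of_logDeriv
    (p := 1 / 3) hq).const_mul K₃
  have d₂ := (hasDerivAt_deriv_rpow_const_of_logDeriv (p := 1 / 3)
    (eventually_hasDerivAt_cardyRatio_snd hab hbc)
    (hasDerivAt_inv_sub_add_inv_sub hab' hbc')).const_mul K₃
  rw [d₁.deriv, d₃.deriv, deriv_const_mul_field', d₂.deriv]
  linear_combination
    (K₃ * cardyRatio a b c ^ (1 / 3 : ℝ)) * cardy_logDeriv_identity hab' hac' hbc'
end

section
/- Hardy-type form bound: for every α > 8/9 there exists B ∈ ℝ such that for every g in the Sobolev space W^{1,2}(0,2π) with g(0)=g(2π)=0, one has ∫₀^{2π} V(θ)|g(θ)|² dθ ≤ α ∫₀^{2π} |g'(θ)|² dθ + B ∫₀^{2π} |g(θ)|² dθ, where V(θ) = 1/12 + (1/18)·cot²(θ/2). -/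
/-!
For the Riccati multiplier `w θ = cot (θ / 2) / 4` one has `-(w' + w²) = 1/8 + cot² (θ / 2) / 16`
(`hardyWeight`), so expanding `0 ≤ ∫_s^t (g' - w g)²` bounds `∫_s^t hardyWeight · g²` by `∫_s^t g'²`
plus the boundary terms `w g²` at `s` and `t`. Since `cot x ≤ 1 / x` and, by Cauchy–Schwarz,
`g(s)² ≤ s ∫_0^s g'²` (symmetrically at `2π`), the boundary terms are absorbed by `∫ g'²` over
`[0, s]` and `[t, 2π]`; letting `s → 0`, `t → 2π` gives `∫_0^{2π} hardyWeight · g² ≤ ∫_0^{2π} g'²`.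
As `V = (8/9) hardyWeight - 1/36`, the bound holds with `B = 0` for every `α ≥ 8/9`.
-/

open Real Set MeasureTheory intervalIntegral Filter Topology

theorem sq_intervalIntegral_le_mul_integral_sq {f : ℝ → ℝ} {a b : ℝ} (hab : a ≤ b)
    (hf : IntervalIntegrable f volume a b)
    (hf2 : IntervalIntegrable (fun x => f x ^ 2) volume a b) :
    (∫ x in a..b, f x) ^ 2 ≤ (b - a) * ∫ x in a..b, f x ^ 2 := by
  have hquad : ∀ c : ℝ,
      0 ≤ (b - a) * (c * c) + (-2 * ∫ x in a..b, f x) * c + ∫ x in a..b, f x ^ 2 := by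
    intro c
    have hnn : 0 ≤ ∫ x in a..b, (f x - c) ^ 2 := integral_nonneg hab fun x _ => sq_nonneg _
    have hexp : (fun x => (f x - c) ^ 2) = fun x => f x ^ 2 - 2 * c * f x + c ^ 2 := by
      ext x; ring
    rw [hexp, integral_add (hf2.sub (hf.const_mul _)) intervalIntegrable_const,
      integral_sub hf2 (hf.const_mul _), intervalIntegral.integral_const_mul,
      intervalIntegral.integral_const, smul_eq_mul] at hnn
    linarith
  have := discrim_le_zero hquad
  unfold discrim at this
  nlinarith

theorem sq_sub_le_mul_integral_deriv_sq {g g' : ℝ → ℝ} {a b : ℝ} (hab : a ≤ b)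
    (hg : ContinuousOn g (Icc a b)) (hderiv : ∀ x ∈ Ioo a b, HasDerivAt g (g' x) x)
    (hg' : IntervalIntegrable g' volume a b)
    (hg'2 : IntervalIntegrable (fun x => g' x ^ 2) volume a b) :
    (g b - g a) ^ 2 ≤ (b - a) * ∫ x in a..b, g' x ^ 2 := by
  rw [← integral_eq_sub_of_hasDerivAt_of_le hab hg hderiv hg']
  exact sq_intervalIntegral_le_mul_integral_sq hab hg' hg'2

theorem IntervalIntegrable.of_hasDerivAt_of_sq {g g' : ℝ → ℝ} {a b : ℝ} (hab : a ≤ b)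
    (hderiv : ∀ x ∈ Ioo a b, HasDerivAt g (g' x) x)
    (hg'2 : IntervalIntegrable (fun x => g' x ^ 2) volume a b) :
    IntervalIntegrable g' volume a b := by
  rw [intervalIntegrable_iff_integrableOn_Ioc_of_le hab] at hg'2 ⊢
  have hmeas : AEStronglyMeasurable g' (volume.restrict (Ioc a b)) := by
    refine (measurable_deriv g).aestronglyMeasurable.congr ?_
    rw [← Measure.restrict_congr_set Ioo_ae_eq_Ioc]
    filter_upwards [ae_restrict_mem measurableSet_Ioo] with x hx
    exact (hderiv x hx).deriv
  exact ((memLp_two_iff_integrable_sq hmeas).2 hg'2).integrable one_le_two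

theorem Real.hasDerivAt_cot {x : ℝ} (hx : sin x ≠ 0) :
    HasDerivAt cot (-(1 + cot x ^ 2)) x := by
  have hcot : cot = fun y => cos y / sin y := funext cot_eq_cos_div_sin
  rw [hcot]
  refine ((hasDerivAt_cos x).div (hasDerivAt_sin x) hx).congr_deriv ?_
  beta_reduce
  field_simp
  ring

theorem Real.cot_le_one_div {x : ℝ} (hx₀ : 0 < x) (hxπ : x < π) : cot x ≤ 1 / x := by
  have hsin : 0 < sin x := sin_pos_of_pos_of_lt_pi hx₀ hxπ
  rw [cot_eq_cos_div_sin, div_le_div_iff₀ hsin hx₀, one_mul]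
  rcases lt_or_ge x (π / 2) with hx | hx
  · have hcos : 0 < cos x := cos_pos_of_mem_Ioo ⟨by linarith, hx⟩
    have := lt_tan hx₀ hx
    rw [tan_eq_sin_div_cos, lt_div_iff₀ hcos] at this
    linarith
  · have hcos : cos x ≤ 0 := cos_nonpos_of_pi_div_two_le_of_le hx (by linarith)
    nlinarith

theorem Real.cot_pi_sub (x : ℝ) : cot (π - x) = -cot x := by
  rw [cot_eq_cos_div_sin, cot_eq_cos_div_sin, cos_pi_sub, sin_pi_sub, neg_div]

theorem Real.cot_half_mul_sq_le {h y I : ℝ} (hh₀ : 0 < h) (hh : h < 2 * π) (hy : y ^ 2 ≤ h * I) :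
    cot (h / 2) * y ^ 2 ≤ 2 * I :=
  calc cot (h / 2) * y ^ 2 ≤ 2 / h * y ^ 2 := by
        gcongr
        simpa [one_div_div] using cot_le_one_div (half_pos hh₀) (by linarith)
    _ ≤ 2 / h * (h * I) := by gcongr
    _ = 2 * I := by field_simp

theorem integral_neg_riccati_mul_sq_le {a b : ℝ} (hab : a ≤ b) {w w' g g' : ℝ → ℝ}
    (hw : ContinuousOn w (Icc a b)) (hw' : ContinuousOn w' (Icc a b))
    (hwderiv : ∀ x ∈ Ioo a b, HasDerivAt w (w' x) x)
    (hg : ContinuousOn g (Icc a b)) (hgderiv : ∀ x ∈ Ioo a b, HasDerivAt g (g' x) x)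
    (hg' : IntervalIntegrable g' volume a b)
    (hg'2 : IntervalIntegrable (fun x => g' x ^ 2) volume a b) :
    ∫ x in a..b, -(w' x + w x ^ 2) * g x ^ 2
      ≤ (∫ x in a..b, g' x ^ 2) + w a * g a ^ 2 - w b * g b ^ 2 := by
  have hq : IntervalIntegrable (fun x => (w' x + w x ^ 2) * g x ^ 2) volume a b :=
    ((hw'.add (hw.pow 2)).mul (hg.pow 2)).intervalIntegrable_of_Icc hab
  have hdiv : IntervalIntegrable (fun x => w' x * g x ^ 2 + 2 * w x * g x * g' x) volume a b :=
    ((hw'.mul (hg.pow 2)).intervalIntegrable_of_Icc hab).add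
      (hg'.continuousOn_mul (by rw [uIcc_of_le hab]; fun_prop))
  have hderiv : ∀ x ∈ Ioo a b, HasDerivAt (fun x => w x * g x ^ 2)
      (w' x * g x ^ 2 + 2 * w x * g x * g' x) x := fun x hx =>
    ((hwderiv x hx).fun_mul ((hgderiv x hx).fun_pow 2)).congr_deriv (by push_cast; ring)
  have hftc : ∫ x in a..b, (w' x * g x ^ 2 + 2 * w x * g x * g' x)
      = w b * g b ^ 2 - w a * g a ^ 2 :=
    integral_eq_sub_of_hasDerivAt_of_le hab (hw.fun_mul (hg.fun_pow 2)) hderiv hdiv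
  have hnn : 0 ≤ ∫ x in a..b,
      (g' x ^ 2 + (w' x + w x ^ 2) * g x ^ 2 - (w' x * g x ^ 2 + 2 * w x * g x * g' x)) :=
    integral_nonneg hab fun x _ => by nlinarith [sq_nonneg (g' x - w x * g x)]
  rw [integral_sub (hg'2.add hq) hdiv, integral_add hg'2 hq, hftc] at hnn
  simp only [neg_mul, intervalIntegral.integral_neg]
  linarith

theorem intervalIntegral_le_of_forall_subinterval_le {f : ℝ → ℝ} {a b K : ℝ} (hab : a < b)
    (hf : IntervalIntegrable f volume a b)
    (h : ∀ s t, a < s → s ≤ t → t < b → ∫ x in s..t, f x ≤ K) : ∫ x in a..b, f x ≤ K := by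
  set Φ : ℝ → ℝ := fun x => ∫ t in a..x, f t
  have hΦ : ContinuousOn Φ (uIcc a b) := continuousOn_primitive_interval' hf left_mem_uIcc
  have hmem : ∀ u ∈ Icc 0 ((b - a) / 2), a + u ∈ uIcc a b ∧ b - u ∈ uIcc a b := by
    intro u hu
    rw [uIcc_of_le hab.le]
    exact ⟨⟨by linarith [hu.1], by linarith [hu.2]⟩, ⟨by linarith [hu.2], by linarith [hu.1]⟩⟩
  have hlim : Tendsto (fun u => Φ (b - u) - Φ (a + u)) (𝓝[Ioo 0 ((b - a) / 2)] 0)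
      (𝓝 (Φ b - Φ a)) := by
    have hcont : ContinuousWithinAt (fun u => Φ (b - u) - Φ (a + u)) (Icc 0 ((b - a) / 2)) 0 := by
      refine ContinuousWithinAt.sub ?_ ?_
      · exact (hΦ.comp (by fun_prop) fun u hu => (hmem u hu).2).continuousWithinAt
          ⟨le_rfl, by linarith⟩
      · exact (hΦ.comp (by fun_prop) fun u hu => (hmem u hu).1).continuousWithinAt
          ⟨le_rfl, by linarith⟩
    simpa using (hcont.mono Ioo_subset_Icc_self).tendsto
  have : (𝓝[Ioo 0 ((b - a) / 2)] (0 : ℝ)).NeBot := left_nhdsWithin_Ioo_neBot (by linarith)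
  have hΦa : Φ a = 0 := integral_same
  rw [hΦa, sub_zero] at hlim
  refine le_of_tendsto hlim (eventually_nhdsWithin_of_forall fun u hu => ?_)
  have hsub := hmem u (Ioo_subset_Icc_self hu)
  rw [integral_interval_sub_left (hf.mono_set (uIcc_subset_uIcc_left hsub.2))
    (hf.mono_set (uIcc_subset_uIcc_left hsub.1))]
  exact h _ _ (by linarith [hu.1]) (by linarith [hu.2]) (by linarith [hu.1])

noncomputable def hardyWeight (θ : ℝ) : ℝ := 1 / 8 + cot (θ / 2) ^ 2 / 16

theorem Real.hasDerivAt_cot_half {θ : ℝ} (hθ : sin (θ / 2) ≠ 0) :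
    HasDerivAt (fun θ => cot (θ / 2)) (-(1 + cot (θ / 2) ^ 2) / 2) θ := by
  have h := (Real.hasDerivAt_cot hθ).comp θ ((hasDerivAt_id' θ).div_const 2)
  exact h.congr_deriv (by ring)

theorem integral_hardyWeight_mul_sq_le {g g' : ℝ → ℝ} {a b : ℝ} (ha : 0 < a) (hab : a ≤ b)
    (hb : b < 2 * π) (hg : ContinuousOn g (Icc a b))
    (hderiv : ∀ x ∈ Ioo a b, HasDerivAt g (g' x) x) (hg' : IntervalIntegrable g' volume a b)
    (hg'2 : IntervalIntegrable (fun x => g' x ^ 2) volume a b) :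
    ∫ θ in a..b, hardyWeight θ * g θ ^ 2
      ≤ (∫ θ in a..b, g' θ ^ 2) + cot (a / 2) / 4 * g a ^ 2 - cot (b / 2) / 4 * g b ^ 2 := by
  have hcot : ∀ θ ∈ Icc a b, HasDerivAt (fun θ => cot (θ / 2)) (-(1 + cot (θ / 2) ^ 2) / 2) θ :=
    fun θ hθ => Real.hasDerivAt_cot_half
      (sin_pos_of_pos_of_lt_pi (by linarith [hθ.1]) (by linarith [hθ.2])).ne'
  have hcotc : ContinuousOn (fun θ => cot (θ / 2)) (Icc a b) :=
    fun θ hθ => (hcot θ hθ).continuousAt.continuousWithinAt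
  calc ∫ θ in a..b, hardyWeight θ * g θ ^ 2
      = ∫ θ in a..b, -(-(1 + cot (θ / 2) ^ 2) / 8 + (cot (θ / 2) / 4) ^ 2) * g θ ^ 2 :=
        integral_congr fun θ _ => by simp only [hardyWeight]; ring
    _ ≤ _ := integral_neg_riccati_mul_sq_le hab (hcotc.div_const 4)
        ((hcotc.pow 2).const_add 1 |>.neg.div_const 8)
        (fun θ hθ => ((hcot θ (Ioo_subset_Icc_self hθ)).div_const 4).congr_deriv (by ring))
        hg hderiv hg' hg'2

theorem integral_hardyWeight_mul_sq_le_integral_deriv_sq {g g' : ℝ → ℝ}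
    (hg : ContinuousOn g (Icc 0 (2 * π))) (hderiv : ∀ x ∈ Ioo 0 (2 * π), HasDerivAt g (g' x) x)
    (h0 : g 0 = 0) (h2π : g (2 * π) = 0) (hg' : IntervalIntegrable g' volume 0 (2 * π))
    (hg'2 : IntervalIntegrable (fun x => g' x ^ 2) volume 0 (2 * π))
    {s t : ℝ} (hs : 0 < s) (hst : s ≤ t) (ht : t < 2 * π) :
    ∫ θ in s..t, hardyWeight θ * g θ ^ 2 ≤ ∫ θ in (0 : ℝ)..(2 * π), g' θ ^ 2 := by
  have hmem : ∀ x, 0 ≤ x → x ≤ 2 * π → x ∈ uIcc 0 (2 * π) := fun x hx₀ hx => by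
    rw [uIcc_of_le (by positivity)]; exact ⟨hx₀, hx⟩
  have hint : ∀ {f : ℝ → ℝ}, IntervalIntegrable f volume 0 (2 * π) →
      ∀ {u v}, 0 ≤ u → u ≤ v → v ≤ 2 * π → IntervalIntegrable f volume u v :=
    fun hf u v hu huv hv =>
      hf.mono_set (uIcc_subset_uIcc (hmem u hu (huv.trans hv)) (hmem v (hu.trans huv) hv))
  have hcont : ∀ {u v}, 0 ≤ u → v ≤ 2 * π → ContinuousOn g (Icc u v) :=
    fun hu hv => hg.mono (Icc_subset_Icc hu hv)
  have hdiff : ∀ {u v}, 0 ≤ u → v ≤ 2 * π → ∀ x ∈ Ioo u v, HasDerivAt g (g' x) x :=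
    fun hu hv x hx => hderiv x ⟨hu.trans_lt hx.1, hx.2.trans_le hv⟩
  have hleft : cot (s / 2) * g s ^ 2 ≤ 2 * ∫ θ in (0 : ℝ)..s, g' θ ^ 2 := by
    refine cot_half_mul_sq_le hs (by linarith) ?_
    simpa [h0] using sq_sub_le_mul_integral_deriv_sq hs.le (hcont le_rfl (by linarith))
      (hdiff le_rfl (by linarith)) (hint hg' le_rfl hs.le (by linarith))
      (hint hg'2 le_rfl hs.le (by linarith))
  have hright : -cot (t / 2) * g t ^ 2 ≤ 2 * ∫ θ in t..(2 * π), g' θ ^ 2 := by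
    have hsq : g t ^ 2 ≤ (2 * π - t) * ∫ θ in t..(2 * π), g' θ ^ 2 := by
      simpa [h2π] using sq_sub_le_mul_integral_deriv_sq ht.le (hcont (by linarith) le_rfl)
        (hdiff (by linarith) le_rfl) (hint hg' (by linarith) ht.le le_rfl)
        (hint hg'2 (by linarith) ht.le le_rfl)
    have h := cot_half_mul_sq_le (by linarith) (by linarith) hsq
    rwa [show (2 * π - t) / 2 = π - t / 2 by ring, cot_pi_sub] at h
  have hmid := integral_hardyWeight_mul_sq_le hs hst ht (hcont hs.le ht.le) (hdiff hs.le ht.le)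
    (hint hg' hs.le hst ht.le) (hint hg'2 hs.le hst ht.le)
  have hsplit : (∫ θ in (0 : ℝ)..s, g' θ ^ 2) + (∫ θ in s..t, g' θ ^ 2)
      + (∫ θ in t..(2 * π), g' θ ^ 2) = ∫ θ in (0 : ℝ)..(2 * π), g' θ ^ 2 := by
    rw [integral_add_adjacent_intervals (hint hg'2 le_rfl hs.le (by linarith))
        (hint hg'2 hs.le hst ht.le),
      integral_add_adjacent_intervals (hint hg'2 le_rfl (by linarith) ht.le)
        (hint hg'2 (by linarith) ht.le le_rfl)]
  have hnn₀ : 0 ≤ ∫ θ in (0 : ℝ)..s, g' θ ^ 2 := integral_nonneg hs.le fun _ _ => sq_nonneg _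
  have hnn₁ : 0 ≤ ∫ θ in t..(2 * π), g' θ ^ 2 := integral_nonneg ht.le fun _ _ => sq_nonneg _
  linarith

/-- Hardy-type form bound: for every `α > 8/9` there is `B` such that every
`g ∈ W^{1,2}(0,2π)` with `g(0) = g(2π) = 0` satisfies
`∫ V g² ≤ α ∫ (g')² + B ∫ g²`, where `V θ = 1/12 + (1/18) cot²(θ/2)`. -/
theorem hardy_form_bound :
    ∀ α : ℝ, 8/9 < α → ∃ B : ℝ,
      ∀ g g' : ℝ → ℝ,
        ContinuousOn g (Icc 0 (2 * π)) →
        (∀ θ ∈ Ioo 0 (2 * π), HasDerivAt g (g' θ) θ) →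
        g 0 = 0 → g (2 * π) = 0 →
        IntervalIntegrable (fun θ => (g' θ) ^ 2) volume 0 (2 * π) →
        IntervalIntegrable
          (fun θ => (1/12 + (1/18) * Real.cot (θ/2) ^ 2) * (g θ) ^ 2)
          volume 0 (2 * π) →
        (∫ θ in (0:ℝ)..(2 * π),
            (1/12 + (1/18) * Real.cot (θ/2) ^ 2) * (g θ) ^ 2)
          ≤ α * (∫ θ in (0:ℝ)..(2 * π), (g' θ) ^ 2)
            + B * (∫ θ in (0:ℝ)..(2 * π), (g θ) ^ 2) := by
  intro α hα
  refine ⟨0, fun g g' hg hderiv h0 h2π hg'2 hVg2 => ?_⟩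
  have h2π₀ : (0 : ℝ) < 2 * π := by positivity
  have hg' := IntervalIntegrable.of_hasDerivAt_of_sq h2π₀.le hderiv hg'2
  have hg2 : IntervalIntegrable (fun θ => g θ ^ 2) volume 0 (2 * π) :=
    (hg.pow 2).intervalIntegrable_of_Icc h2π₀.le
  have hV : ∀ θ, (1/12 + (1/18) * cot (θ/2) ^ 2) * g θ ^ 2
      = 8 / 9 * (hardyWeight θ * g θ ^ 2) - 1 / 36 * g θ ^ 2 := fun θ => by
    simp only [hardyWeight]; ring
  have hW : IntervalIntegrable (fun θ => hardyWeight θ * g θ ^ 2) volume 0 (2 * π) := by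
    convert (hVg2.const_mul (9 / 8)).add (hg2.const_mul (1 / 32)) using 1
    funext θ
    simp only [hardyWeight]
    ring
  have hWle : ∫ θ in (0 : ℝ)..(2 * π), hardyWeight θ * g θ ^ 2
      ≤ ∫ θ in (0 : ℝ)..(2 * π), g' θ ^ 2 :=
    intervalIntegral_le_of_forall_subinterval_le h2π₀ hW fun s t hs hst ht =>
      integral_hardyWeight_mul_sq_le_integral_deriv_sq hg hderiv h0 h2π hg' hg'2 hs hst ht
  have hα' : 8 / 9 * ∫ θ in (0 : ℝ)..(2 * π), g' θ ^ 2 ≤ α * ∫ θ in (0 : ℝ)..(2 * π), g' θ ^ 2 :=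
    mul_le_mul_of_nonneg_right hα.le (integral_nonneg h2π₀.le fun _ _ => sq_nonneg _)
  have hg2₀ : 0 ≤ ∫ θ in (0 : ℝ)..(2 * π), g θ ^ 2 := integral_nonneg h2π₀.le fun _ _ => sq_nonneg _
  simp_rw [hV]
  rw [integral_sub (hW.const_mul _) (hg2.const_mul _), intervalIntegral.integral_const_mul,
    intervalIntegral.integral_const_mul]
  linarith
end

section
/- Asymptotic expansion of the inverse map: let ψ₁ be the inverse of φ(z) = (cosh(πz)+1)/2, mapping ℍ to the strip S = {0 < Re z, 0 < Im z < 1}. Then |ψ₁'(z)| = π^{-1}|z−1|^{-1/2} + o(|z−1|^{-1/2}) as z → 1 in ℍ. -/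
/-!
Differentiating `(cosh (π ψ₁ z) + 1) / 2 = z` gives `π sinh (π ψ₁ z) ψ₁'(z) = 2`, and
`sinh² = cosh² - 1 = 4 z (z - 1)` at `w = π ψ₁ z`. Hence
`|ψ₁'(z)| |z - 1|^{1/2} = 1 / (π |z|^{1/2})` exactly on `ℍ`, which tends to `1 / π` as `z → 1`.
-/

open Complex Filter Set Topology
open scoped Real

theorem sinh_sq_eq_of_cosh_add_one_div_two_eq {w z : ℂ} (h : (cosh w + 1) / 2 = z) :
    sinh w ^ 2 = 4 * z * (z - 1) := by
  subst h
  linear_combination -(cosh_sq_sub_sinh_sq w)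

theorem sinh_mul_mul_deriv_eq_two {f : ℂ → ℂ} {c z : ℂ} (hf : DifferentiableAt ℂ f z)
    (h : ∀ᶠ w in 𝓝 z, (cosh (c * f w) + 1) / 2 = w) :
    sinh (c * f z) * (c * deriv f z) = 2 := by
  have hF : HasDerivAt (fun w => (cosh (c * f w) + 1) / 2)
      (sinh (c * f z) * (c * deriv f z) / 2) z :=
    (((hasDerivAt_cosh _).comp z (hf.hasDerivAt.const_mul c)).add_const 1).div_const 2
  have hid := (hF.congr_of_eventuallyEq (h.mono fun w hw => hw.symm)).unique (hasDerivAt_id' z)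
  linear_combination 2 * hid

theorem norm_eq_two_mul_sqrt_mul_sqrt_of_sq_eq {s z : ℂ} (h : s ^ 2 = 4 * z * (z - 1)) :
    ‖s‖ = 2 * √‖z‖ * √‖z - 1‖ := by
  refine (sq_eq_sq₀ (norm_nonneg s) (by positivity)).1 ?_
  rw [← norm_pow, h, mul_pow, mul_pow, Real.sq_sqrt (norm_nonneg _),
    Real.sq_sqrt (norm_nonneg _), norm_mul, norm_mul]
  norm_num

theorem norm_deriv_mul_sqrt_eq_of_eventually_cosh_eq {f : ℂ → ℂ} {z : ℂ}
    (hf : DifferentiableAt ℂ f z) (h : ∀ᶠ w in 𝓝 z, (cosh (π * f w) + 1) / 2 = w) :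
    ‖deriv f z‖ * ‖z - 1‖ ^ (1 / 2 : ℝ) = (π * √‖z‖)⁻¹ := by
  have hderiv := congrArg norm (sinh_mul_mul_deriv_eq_two hf h)
  have hsinh := norm_eq_two_mul_sqrt_mul_sqrt_of_sq_eq
    (sinh_sq_eq_of_cosh_add_one_div_two_eq h.self_of_nhds)
  rw [norm_mul, norm_mul, hsinh, norm_real, Real.norm_of_nonneg Real.pi_pos.le,
    Complex.norm_two] at hderiv
  rw [← Real.sqrt_eq_rpow]
  refine eq_inv_of_mul_eq_one_left ?_
  linear_combination hderiv / 2

theorem inverse_map_asymptotics_general (ψ₁ : ℂ → ℂ)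
    (S : Set ℂ)
    (H : Set ℂ) (hH : H = {z | 0 < z.im})
    (hright : ∀ z ∈ H, (Complex.cosh (Real.pi * ψ₁ z) + 1) / 2 = z ∧ ψ₁ z ∈ S)
    (hdiff : DifferentiableOn ℂ ψ₁ H) :
    Tendsto (fun z => ‖deriv ψ₁ z‖ * ‖z - 1‖ ^ ((1:ℝ)/2))
      (nhdsWithin 1 H) (nhds (1 / Real.pi)) := by
  have hH_open : IsOpen H := hH ▸ isOpen_lt continuous_const continuous_im
  have hlim : Tendsto (fun z : ℂ => (π * √‖z‖)⁻¹) (𝓝[H] 1) (𝓝 (1 / π)) := by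
    have hcont : ContinuousAt (fun z : ℂ => (π * √‖z‖)⁻¹) 1 :=
      (continuous_const.mul continuous_norm.sqrt).continuousAt.inv₀ (by simp [Real.pi_ne_zero])
    simpa using hcont.tendsto.mono_left nhdsWithin_le_nhds
  refine hlim.congr' (eventually_nhdsWithin_of_forall fun z hz => ?_)
  have hz : H ∈ 𝓝 z := hH_open.mem_nhds hz
  exact (norm_deriv_mul_sqrt_eq_of_eventually_cosh_eq (hdiff.differentiableAt hz)
    (eventually_of_mem hz fun w hw => (hright w hw).1)).symm

/-- Asymptotics of the inverse map: if `ψ₁` is the inverse of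
`φ(z) = (cosh(πz)+1)/2 : S → ℍ`, then
`|ψ₁'(z)| = π⁻¹|z−1|^{-1/2} + o(|z−1|^{-1/2})` as `z → 1` in `ℍ`, i.e.
`|ψ₁'(z)| · |z−1|^{1/2} → 1/π`. -/
theorem inverse_map_asymptotics (ψ₁ : ℂ → ℂ)
    (S : Set ℂ) (hS : S = {z | 0 < z.re ∧ 0 < z.im ∧ z.im < 1})
    (H : Set ℂ) (hH : H = {z | 0 < z.im})
    (hleft : ∀ z ∈ S, ψ₁ ((Complex.cosh (Real.pi * z) + 1) / 2) = z)
    (hright : ∀ z ∈ H, (Complex.cosh (Real.pi * ψ₁ z) + 1) / 2 = z ∧ ψ₁ z ∈ S)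
    (hdiff : DifferentiableOn ℂ ψ₁ H) :
    Tendsto (fun z => ‖deriv ψ₁ z‖ * ‖z - 1‖ ^ ((1:ℝ)/2))
      (nhdsWithin 1 H) (nhds (1 / Real.pi)) :=
  inverse_map_asymptotics_general ψ₁ S H hH hright hdiff
end

section
/- Asymptotics of the cross-ratio map: for fixed u₁ < u₃ real and w ∈ ℍ, let ψ₂(z) = ((z−u₁)/(z−u₃))·((u₂−u₃)/(u₂−u₁)), the Möbius map sending u₁,u₂,u₃ to 0,1,∞. Then as u₂ → u₁⁺: ψ₂(w) ~ −(w−u₁)(u₃−u₁)/((w−u₃)|u₂−u₁|) and ψ₂'(w) ~ (u₃−u₁)²/((w−u₃)²|u₁−u₂|). -/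
open Complex Filter Set

/-- Asymptotics of the Möbius map `ψ₂(z) = ((z−u₁)/(z−u₃))·((u₂−u₃)/(u₂−u₁))`
(sending `u₁,u₂,u₃ ↦ 0,1,∞`) as `u₂ → u₁⁺`:
`ψ₂(w) ~ −(w−u₁)(u₃−u₁)/((w−u₃)|u₂−u₁|)` and
`ψ₂'(w) ~ (u₃−u₁)²/((w−u₃)²|u₁−u₂|)`. -/
theorem mobius_asymptotics (u₁ u₃ : ℝ) (w : ℂ)
    (h13 : u₁ < u₃) (hw : 0 < w.im) :
    Tendsto
      (fun u₂ : ℝ =>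
        (((w - u₁) / (w - u₃)) * (((u₂ : ℂ) - u₃) / ((u₂ : ℂ) - u₁)))
          / (-(w - u₁) * ((u₃ : ℂ) - u₁) / ((w - u₃) * (|u₂ - u₁| : ℝ))))
      (nhdsWithin u₁ (Ioi u₁)) (nhds 1) ∧
    Tendsto
      (fun u₂ : ℝ =>
        deriv (fun z : ℂ => ((z - u₁) / (z - u₃))
            * (((u₂ : ℂ) - u₃) / ((u₂ : ℂ) - u₁))) w
          / (((u₃ : ℂ) - u₁) ^ 2 / ((w - u₃) ^ 2 * (|u₁ - u₂| : ℝ))))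
      (nhdsWithin u₁ (Ioi u₁)) (nhds 1) := by
  have hw3 : w - (u₃ : ℂ) ≠ 0 := by
    intro h
    rw [sub_eq_zero] at h
    rw [h] at hw
    simp at hw
  have hw1 : w - (u₁ : ℂ) ≠ 0 := by
    intro h
    rw [sub_eq_zero] at h
    rw [h] at hw
    simp at hw
  have h31 : ((u₃ : ℂ) - u₁) ≠ 0 := by
    norm_cast
    exact sub_ne_zero.mpr h13.ne'
  have hlim : Tendsto (fun u₂ : ℝ => (((u₃ : ℂ) - u₂) / ((u₃ : ℂ) - u₁)))
      (nhdsWithin u₁ (Ioi u₁)) (nhds 1) := by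
    have h : Tendsto (fun u₂ : ℝ => (((u₃ : ℂ) - u₂) / ((u₃ : ℂ) - u₁)))
        (nhds u₁) (nhds (((u₃ : ℂ) - u₁) / ((u₃ : ℂ) - u₁))) :=
      ((continuous_const.sub Complex.continuous_ofReal).tendsto u₁).div_const _
    rw [div_self h31] at h
    exact h.mono_left nhdsWithin_le_nhds
  constructor
  · refine hlim.congr' ?_
    filter_upwards [self_mem_nhdsWithin] with u₂ hu₂
    have hpos : (0 : ℝ) < u₂ - u₁ := sub_pos.mpr hu₂
    have h21 : ((u₂ : ℂ) - u₁) ≠ 0 := by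
      norm_cast
      exact sub_ne_zero.mpr (ne_of_gt hu₂)
    have hne : -(w - (u₁ : ℂ)) * ((u₃ : ℂ) - u₁) / ((w - (u₃ : ℂ)) * ((u₂ : ℂ) - u₁)) ≠ 0 :=
      div_ne_zero (mul_ne_zero (neg_ne_zero.mpr hw1) h31) (mul_ne_zero hw3 h21)
    rw [abs_of_pos hpos]
    push_cast
    rw [eq_comm, div_eq_iff hne]
    field_simp
    ring
  · refine hlim.congr' ?_
    filter_upwards [self_mem_nhdsWithin] with u₂ hu₂
    have hpos : (0 : ℝ) < u₂ - u₁ := sub_pos.mpr hu₂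
    have h21 : ((u₂ : ℂ) - u₁) ≠ 0 := by
      norm_cast
      exact sub_ne_zero.mpr (ne_of_gt hu₂)
    have h1 : HasDerivAt (fun z : ℂ => (z - (u₁ : ℂ)) / (z - (u₃ : ℂ)))
        (((1 : ℂ) * (w - u₃) - (w - (u₁ : ℂ)) * 1) / (w - u₃) ^ 2) w :=
      (((hasDerivAt_id w).sub_const _).div ((hasDerivAt_id w).sub_const _) hw3)
    have h2 := h1.mul_const (((u₂ : ℂ) - u₃) / ((u₂ : ℂ) - u₁))
    rw [h2.deriv]
    have habs : |u₁ - u₂| = u₂ - u₁ := by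
      rw [abs_sub_comm]; exact abs_of_pos hpos
    rw [habs]
    push_cast
    field_simp
    ring
end
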